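/- For ξ = Σ_{i=1}^7 n_i H_i set θ(ξ) = 2n_1+2n_2+3n_3+4n_4+3n_5+2n_6+n_7 and ω_7(ξ) = n_1 + (3/2)n_2 + 2n_3 + 3n_4 + (5/2)n_5 + 2n_6 + (3/2)n_7 (the evaluations at ξ of the highest root θ of e_7 and of the fundamental weight ω_7, using α_i(H_j) = δ_ij). Then the maximum of 2θ(ξ) over all I-canonical elements ξ of Ẽ_7, taken over all nonempty I ⊆ {1,…,7}, equals 40, and the maximum of 2ω_7(ξ) over the same set equals 32; both maxima are attained at ξ = H_1+H_2+H_3+H_4+2H_5+H_6+H_7. (These are the minimal uniton numbers of Ẽ_7 for the adjoint representation and for the 56-dimensional representation, both of which are self-dual.) -/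
import Mathlib


/-- The duals `H_1, …, H_7` of the simple roots of `e_7`, expressed in coordinates
with respect to the basis `η_1, …, η_7` dual to the fundamental weights. -/
def HE7 : ℕ → Fin 7 → ℚ
  | 1 => ![2, 2, 3, 4, 3, 2, 1]
  | 2 => ![2, 7/2, 4, 6, 9/2, 3, 3/2]
  | 3 => ![3, 4, 6, 8, 6, 4, 2]
  | 4 => ![4, 6, 8, 12, 9, 6, 3]
  | 5 => ![3, 9/2, 6, 9, 15/2, 5, 5/2]
  | 6 => ![2, 3, 4, 6, 5, 4, 2]
  | 7 => ![1, 3/2, 2, 3, 5/2, 2, 3/2]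
  | _ => 0

/-- The integer lattice of the simply connected group `Ẽ_7`: `ℤ^7` in
`η`-coordinates. -/
def JE7 : Set (Fin 7 → ℚ) := {v | ∀ j, ∃ m : ℤ, v j = m}

/-- `c : ℕ → ℕ` gives the coefficients of an `I`-canonical element
`ξ = Σ_{i∈I} c_i H_i` of `Ẽ_7`. -/
def ICanonCoeff (I : Finset ℕ) (c : ℕ → ℕ) : Prop :=
  (∀ i ∈ I, 1 ≤ c i) ∧ (∑ i ∈ I, c i • HE7 i) ∈ JE7 ∧
    ∀ c' : ℕ → ℕ, (∀ i ∈ I, 1 ≤ c' i ∧ c' i ≤ c i) →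
      (∑ i ∈ I, c' i • HE7 i) ∈ JE7 →
      (∑ i ∈ I, c' i • HE7 i) = ∑ i ∈ I, c i • HE7 i

/-- The coefficients of the highest root `θ = 2α₁+2α₂+3α₃+4α₄+3α₅+2α₆+α₇` of `e_7`,
so that `θ(Σ n_i H_i) = Σ θcoef(i) n_i` (using `α_i(H_j) = δ_ij`). -/
def thetaCoef : ℕ → ℚ
  | 1 => 2 | 2 => 2 | 3 => 3 | 4 => 4 | 5 => 3 | 6 => 2 | 7 => 1 | _ => 0

/-- The coefficients of the fundamental weight
`ω₇ = α₁+(3/2)α₂+2α₃+3α₄+(5/2)α₅+2α₆+(3/2)α₇` of `e_7`. -/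
def omega7Coef : ℕ → ℚ
  | 1 => 1 | 2 => 3/2 | 3 => 2 | 4 => 3 | 5 => 5/2 | 6 => 2 | 7 => 3/2 | _ => 0

lemma HE7v_1_0 : HE7 1 (0 : Fin 7) = 2 := rfl

lemma HE7v_1_1 : HE7 1 (1 : Fin 7) = 2 := rfl

lemma HE7v_1_2 : HE7 1 (2 : Fin 7) = 3 := rfl

lemma HE7v_1_3 : HE7 1 (3 : Fin 7) = 4 := rfl

lemma HE7v_1_4 : HE7 1 (4 : Fin 7) = 3 := rfl

lemma HE7v_1_5 : HE7 1 (5 : Fin 7) = 2 := rfl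

lemma HE7v_1_6 : HE7 1 (6 : Fin 7) = 1 := rfl

lemma HE7v_2_0 : HE7 2 (0 : Fin 7) = 2 := rfl

lemma HE7v_2_1 : HE7 2 (1 : Fin 7) = (7/2) := rfl

lemma HE7v_2_2 : HE7 2 (2 : Fin 7) = 4 := rfl

lemma HE7v_2_3 : HE7 2 (3 : Fin 7) = 6 := rfl

lemma HE7v_2_4 : HE7 2 (4 : Fin 7) = (9/2) := rfl

lemma HE7v_2_5 : HE7 2 (5 : Fin 7) = 3 := rfl

lemma HE7v_2_6 : HE7 2 (6 : Fin 7) = (3/2) := rfl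

lemma HE7v_3_0 : HE7 3 (0 : Fin 7) = 3 := rfl

lemma HE7v_3_1 : HE7 3 (1 : Fin 7) = 4 := rfl

lemma HE7v_3_2 : HE7 3 (2 : Fin 7) = 6 := rfl

lemma HE7v_3_3 : HE7 3 (3 : Fin 7) = 8 := rfl

lemma HE7v_3_4 : HE7 3 (4 : Fin 7) = 6 := rfl

lemma HE7v_3_5 : HE7 3 (5 : Fin 7) = 4 := rfl

lemma HE7v_3_6 : HE7 3 (6 : Fin 7) = 2 := rfl

lemma HE7v_4_0 : HE7 4 (0 : Fin 7) = 4 := rfl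

lemma HE7v_4_1 : HE7 4 (1 : Fin 7) = 6 := rfl

lemma HE7v_4_2 : HE7 4 (2 : Fin 7) = 8 := rfl

lemma HE7v_4_3 : HE7 4 (3 : Fin 7) = 12 := rfl

lemma HE7v_4_4 : HE7 4 (4 : Fin 7) = 9 := rfl

lemma HE7v_4_5 : HE7 4 (5 : Fin 7) = 6 := rfl

lemma HE7v_4_6 : HE7 4 (6 : Fin 7) = 3 := rfl

lemma HE7v_5_0 : HE7 5 (0 : Fin 7) = 3 := rfl

lemma HE7v_5_1 : HE7 5 (1 : Fin 7) = (9/2) := rfl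

lemma HE7v_5_2 : HE7 5 (2 : Fin 7) = 6 := rfl

lemma HE7v_5_3 : HE7 5 (3 : Fin 7) = 9 := rfl

lemma HE7v_5_4 : HE7 5 (4 : Fin 7) = (15/2) := rfl

lemma HE7v_5_5 : HE7 5 (5 : Fin 7) = 5 := rfl

lemma HE7v_5_6 : HE7 5 (6 : Fin 7) = (5/2) := rfl

lemma HE7v_6_0 : HE7 6 (0 : Fin 7) = 2 := rfl

lemma HE7v_6_1 : HE7 6 (1 : Fin 7) = 3 := rfl

lemma HE7v_6_2 : HE7 6 (2 : Fin 7) = 4 := rfl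

lemma HE7v_6_3 : HE7 6 (3 : Fin 7) = 6 := rfl

lemma HE7v_6_4 : HE7 6 (4 : Fin 7) = 5 := rfl

lemma HE7v_6_5 : HE7 6 (5 : Fin 7) = 4 := rfl

lemma HE7v_6_6 : HE7 6 (6 : Fin 7) = 2 := rfl

lemma HE7v_7_0 : HE7 7 (0 : Fin 7) = 1 := rfl

lemma HE7v_7_1 : HE7 7 (1 : Fin 7) = (3/2) := rfl

lemma HE7v_7_2 : HE7 7 (2 : Fin 7) = 2 := rfl

lemma HE7v_7_3 : HE7 7 (3 : Fin 7) = 3 := rfl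

lemma HE7v_7_4 : HE7 7 (4 : Fin 7) = (5/2) := rfl

lemma HE7v_7_5 : HE7 7 (5 : Fin 7) = 2 := rfl

lemma HE7v_7_6 : HE7 7 (6 : Fin 7) = (3/2) := rfl

lemma coordE7_0 (d : ℕ → ℕ) : (∑ i ∈ Finset.Icc 1 7, d i • HE7 i) (0 : Fin 7) = 2*(d 1:ℚ) + 2*(d 2:ℚ) + 3*(d 3:ℚ) + 4*(d 4:ℚ) + 3*(d 5:ℚ) + 2*(d 6:ℚ) + 1*(d 7:ℚ) := by
  rw [show Finset.Icc 1 7 = ({1,2,3,4,5,6,7} : Finset ℕ) by rfl]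
  simp [Finset.sum_insert, Finset.mem_insert, Pi.add_apply, nsmul_eq_mul, HE7v_1_0, HE7v_2_0, HE7v_3_0, HE7v_4_0, HE7v_5_0, HE7v_6_0, HE7v_7_0]
  ring

lemma coordE7_1 (d : ℕ → ℕ) : (∑ i ∈ Finset.Icc 1 7, d i • HE7 i) (1 : Fin 7) = 2*(d 1:ℚ) + (7/2)*(d 2:ℚ) + 4*(d 3:ℚ) + 6*(d 4:ℚ) + (9/2)*(d 5:ℚ) + 3*(d 6:ℚ) + (3/2)*(d 7:ℚ) := by
  rw [show Finset.Icc 1 7 = ({1,2,3,4,5,6,7} : Finset ℕ) by rfl]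
  simp [Finset.sum_insert, Finset.mem_insert, Pi.add_apply, nsmul_eq_mul, HE7v_1_1, HE7v_2_1, HE7v_3_1, HE7v_4_1, HE7v_5_1, HE7v_6_1, HE7v_7_1]
  ring

lemma coordE7_2 (d : ℕ → ℕ) : (∑ i ∈ Finset.Icc 1 7, d i • HE7 i) (2 : Fin 7) = 3*(d 1:ℚ) + 4*(d 2:ℚ) + 6*(d 3:ℚ) + 8*(d 4:ℚ) + 6*(d 5:ℚ) + 4*(d 6:ℚ) + 2*(d 7:ℚ) := by
  rw [show Finset.Icc 1 7 = ({1,2,3,4,5,6,7} : Finset ℕ) by rfl]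
  simp [Finset.sum_insert, Finset.mem_insert, Pi.add_apply, nsmul_eq_mul, HE7v_1_2, HE7v_2_2, HE7v_3_2, HE7v_4_2, HE7v_5_2, HE7v_6_2, HE7v_7_2]
  ring

lemma coordE7_3 (d : ℕ → ℕ) : (∑ i ∈ Finset.Icc 1 7, d i • HE7 i) (3 : Fin 7) = 4*(d 1:ℚ) + 6*(d 2:ℚ) + 8*(d 3:ℚ) + 12*(d 4:ℚ) + 9*(d 5:ℚ) + 6*(d 6:ℚ) + 3*(d 7:ℚ) := by
  rw [show Finset.Icc 1 7 = ({1,2,3,4,5,6,7} : Finset ℕ) by rfl]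
  simp [Finset.sum_insert, Finset.mem_insert, Pi.add_apply, nsmul_eq_mul, HE7v_1_3, HE7v_2_3, HE7v_3_3, HE7v_4_3, HE7v_5_3, HE7v_6_3, HE7v_7_3]
  ring

lemma coordE7_4 (d : ℕ → ℕ) : (∑ i ∈ Finset.Icc 1 7, d i • HE7 i) (4 : Fin 7) = 3*(d 1:ℚ) + (9/2)*(d 2:ℚ) + 6*(d 3:ℚ) + 9*(d 4:ℚ) + (15/2)*(d 5:ℚ) + 5*(d 6:ℚ) + (5/2)*(d 7:ℚ) := by
  rw [show Finset.Icc 1 7 = ({1,2,3,4,5,6,7} : Finset ℕ) by rfl]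
  simp [Finset.sum_insert, Finset.mem_insert, Pi.add_apply, nsmul_eq_mul, HE7v_1_4, HE7v_2_4, HE7v_3_4, HE7v_4_4, HE7v_5_4, HE7v_6_4, HE7v_7_4]
  ring

lemma coordE7_5 (d : ℕ → ℕ) : (∑ i ∈ Finset.Icc 1 7, d i • HE7 i) (5 : Fin 7) = 2*(d 1:ℚ) + 3*(d 2:ℚ) + 4*(d 3:ℚ) + 6*(d 4:ℚ) + 5*(d 5:ℚ) + 4*(d 6:ℚ) + 2*(d 7:ℚ) := by
  rw [show Finset.Icc 1 7 = ({1,2,3,4,5,6,7} : Finset ℕ) by rfl]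
  simp [Finset.sum_insert, Finset.mem_insert, Pi.add_apply, nsmul_eq_mul, HE7v_1_5, HE7v_2_5, HE7v_3_5, HE7v_4_5, HE7v_5_5, HE7v_6_5, HE7v_7_5]
  ring

lemma coordE7_6 (d : ℕ → ℕ) : (∑ i ∈ Finset.Icc 1 7, d i • HE7 i) (6 : Fin 7) = 1*(d 1:ℚ) + (3/2)*(d 2:ℚ) + 2*(d 3:ℚ) + 3*(d 4:ℚ) + (5/2)*(d 5:ℚ) + 2*(d 6:ℚ) + (3/2)*(d 7:ℚ) := by
  rw [show Finset.Icc 1 7 = ({1,2,3,4,5,6,7} : Finset ℕ) by rfl]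
  simp [Finset.sum_insert, Finset.mem_insert, Pi.add_apply, nsmul_eq_mul, HE7v_1_6, HE7v_2_6, HE7v_3_6, HE7v_4_6, HE7v_5_6, HE7v_6_6, HE7v_7_6]
  ring

lemma vec_restrict {I : Finset ℕ} (hI : I ⊆ Finset.Icc 1 7) (c : ℕ → ℕ) :
    ∑ i ∈ I, c i • HE7 i = ∑ i ∈ Finset.Icc 1 7, (if i ∈ I then c i else 0) • HE7 i := by
  rw [eq_comm]
  simp only [ite_smul, zero_smul, Finset.sum_ite_mem, Finset.inter_eq_right.mpr hI]

lemma sum_restrict {I : Finset ℕ} (hI : I ⊆ Finset.Icc 1 7) (f : ℕ → ℚ) (c : ℕ → ℕ) :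
    ∑ i ∈ I, f i * (c i : ℚ) =
      ∑ i ∈ Finset.Icc 1 7, f i * ((if i ∈ I then c i else 0 : ℕ) : ℚ) := by
  rw [eq_comm]
  simp only [Nat.cast_ite, Nat.cast_zero, mul_ite, mul_zero, Finset.sum_ite_mem,
    Finset.inter_eq_right.mpr hI]

lemma memJE7_iff (d : ℕ → ℕ) :
    (∑ i ∈ Finset.Icc 1 7, d i • HE7 i) ∈ JE7 ↔ Even (d 2 + d 5 + d 7) := by
  constructor
  · intro h
    obtain ⟨m, hm⟩ := h 1
    rw [coordE7_1] at hm
    have hz : (4*d 1 + 7*d 2 + 8*d 3 + 12*d 4 + 9*d 5 + 6*d 6 + 3*d 7 : ℤ) = 2*m := by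
      have : ((4*d 1 + 7*d 2 + 8*d 3 + 12*d 4 + 9*d 5 + 6*d 6 + 3*d 7 : ℤ) : ℚ)
          = ((2*m : ℤ) : ℚ) := by push_cast; linear_combination 2*hm
      exact_mod_cast this
    rw [Nat.even_iff]
    omega
  · rintro ⟨k, hk⟩
    have hk' : (d 2 : ℚ) + d 5 + d 7 = k + k := by exact_mod_cast congrArg (Nat.cast : ℕ → ℚ) hk
    intro j
    fin_cases j
    · show ∃ m : ℤ, (∑ i ∈ Finset.Icc 1 7, d i • HE7 i) (0 : Fin 7) = (m : ℚ)
      exact ⟨2*d 1+2*d 2+3*d 3+4*d 4+3*d 5+2*d 6+d 7, by rw [coordE7_0]; push_cast; ring⟩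
    · show ∃ m : ℤ, (∑ i ∈ Finset.Icc 1 7, d i • HE7 i) (1 : Fin 7) = (m : ℚ)
      exact ⟨2*d 1+2*d 2+4*d 3+6*d 4+3*d 5+3*d 6+3*k, by
        rw [coordE7_1]; push_cast; linear_combination (3/2)*hk'⟩
    · show ∃ m : ℤ, (∑ i ∈ Finset.Icc 1 7, d i • HE7 i) (2 : Fin 7) = (m : ℚ)
      exact ⟨3*d 1+4*d 2+6*d 3+8*d 4+6*d 5+4*d 6+2*d 7, by rw [coordE7_2]; push_cast; ring⟩
    · show ∃ m : ℤ, (∑ i ∈ Finset.Icc 1 7, d i • HE7 i) (3 : Fin 7) = (m : ℚ)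
      exact ⟨4*d 1+6*d 2+8*d 3+12*d 4+9*d 5+6*d 6+3*d 7, by rw [coordE7_3]; push_cast; ring⟩
    · show ∃ m : ℤ, (∑ i ∈ Finset.Icc 1 7, d i • HE7 i) (4 : Fin 7) = (m : ℚ)
      exact ⟨3*d 1+2*d 2+6*d 3+9*d 4+5*d 5+5*d 6+5*k, by
        rw [coordE7_4]; push_cast; linear_combination (5/2)*hk'⟩
    · show ∃ m : ℤ, (∑ i ∈ Finset.Icc 1 7, d i • HE7 i) (5 : Fin 7) = (m : ℚ)
      exact ⟨2*d 1+3*d 2+4*d 3+6*d 4+5*d 5+4*d 6+2*d 7, by rw [coordE7_5]; push_cast; ring⟩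
    · show ∃ m : ℤ, (∑ i ∈ Finset.Icc 1 7, d i • HE7 i) (6 : Fin 7) = (m : ℚ)
      exact ⟨d 1+2*d 3+3*d 4+d 5+2*d 6+3*k, by
        rw [coordE7_6]; push_cast; linear_combination (3/2)*hk'⟩

lemma injE7 {d e : ℕ → ℕ}
    (h : ∑ i ∈ Finset.Icc 1 7, d i • HE7 i = ∑ i ∈ Finset.Icc 1 7, e i • HE7 i) :
    ∀ i ∈ Finset.Icc 1 7, d i = e i := by
  have h0 := (coordE7_0 d).symm.trans ((congrFun h (0 : Fin 7)).trans (coordE7_0 e))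
  have h1 := (coordE7_1 d).symm.trans ((congrFun h (1 : Fin 7)).trans (coordE7_1 e))
  have h2 := (coordE7_2 d).symm.trans ((congrFun h (2 : Fin 7)).trans (coordE7_2 e))
  have h3 := (coordE7_3 d).symm.trans ((congrFun h (3 : Fin 7)).trans (coordE7_3 e))
  have h4 := (coordE7_4 d).symm.trans ((congrFun h (4 : Fin 7)).trans (coordE7_4 e))
  have h5 := (coordE7_5 d).symm.trans ((congrFun h (5 : Fin 7)).trans (coordE7_5 e))
  have h6 := (coordE7_6 d).symm.trans ((congrFun h (6 : Fin 7)).trans (coordE7_6 e))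
  intro i hi
  rw [Finset.mem_Icc] at hi
  obtain ⟨hlo, hhi⟩ := hi
  have q1 : (d 1 : ℚ) = e 1 := by linear_combination 2*h0 - h2
  have q2 : (d 2 : ℚ) = e 2 := by linear_combination 2*h1 - h3
  have q3 : (d 3 : ℚ) = e 3 := by linear_combination -h0 + 2*h2 - h3
  have q4 : (d 4 : ℚ) = e 4 := by linear_combination -h1 - h2 + 2*h3 - h4
  have q5 : (d 5 : ℚ) = e 5 := by linear_combination -h3 + 2*h4 - h5
  have q6 : (d 6 : ℚ) = e 6 := by linear_combination -h4 + 2*h5 - h6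
  have q7 : (d 7 : ℚ) = e 7 := by linear_combination -h5 + 2*h6
  interval_cases i
  exacts [Nat.cast_inj.mp q1, Nat.cast_inj.mp q2, Nat.cast_inj.mp q3, Nat.cast_inj.mp q4,
    Nat.cast_inj.mp q5, Nat.cast_inj.mp q6, Nat.cast_inj.mp q7]

lemma canon_facts {I : Finset ℕ} (hI : I ⊆ Finset.Icc 1 7) {c : ℕ → ℕ}
    (hc : ICanonCoeff I c) :
    (∀ i ∈ I, i ≠ 2 → i ≠ 5 → i ≠ 7 → c i = 1) ∧ (∀ i ∈ I, c i ≤ 2) ∧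
      (2 ∈ I → 5 ∈ I → ¬(2 ≤ c 2 ∧ 2 ≤ c 5)) ∧
      (2 ∈ I → 7 ∈ I → ¬(2 ≤ c 2 ∧ 2 ≤ c 7)) ∧
      (5 ∈ I → 7 ∈ I → ¬(2 ≤ c 5 ∧ 2 ≤ c 7)) := by
  obtain ⟨hpos, hmem, hmin⟩ := hc
  have heven : Even ((if 2 ∈ I then c 2 else 0) + (if 5 ∈ I then c 5 else 0)
      + (if 7 ∈ I then c 7 else 0)) := by
    exact (memJE7_iff _).mp (by rw [← vec_restrict hI]; exact hmem)
  have key : ∀ c' : ℕ → ℕ, (∀ i ∈ I, 1 ≤ c' i ∧ c' i ≤ c i) →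
      Even ((if 2 ∈ I then c' 2 else 0) + (if 5 ∈ I then c' 5 else 0)
        + (if 7 ∈ I then c' 7 else 0)) → ∀ i ∈ I, c' i = c i := by
    intro c' hb hev i hi
    have hm : (∑ i ∈ I, c' i • HE7 i) ∈ JE7 := by
      rw [vec_restrict hI]; exact (memJE7_iff _).mpr hev
    have hs := hmin c' hb hm
    rw [vec_restrict hI c', vec_restrict hI c] at hs
    have := injE7 hs i (hI hi)
    simpa [if_pos hi] using this
  have hone : ∀ i ∈ I, i ≠ 2 → i ≠ 5 → i ≠ 7 → c i = 1 := by
    intro i hi n2 n5 n7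
    have hb : ∀ j ∈ I, 1 ≤ Function.update c i 1 j ∧ Function.update c i 1 j ≤ c j := by
      intro j hj
      rcases eq_or_ne j i with rfl | hne
      · rw [Function.update_self]; exact ⟨le_refl 1, hpos j hj⟩
      · rw [Function.update_of_ne hne]; exact ⟨hpos j hj, le_refl _⟩
    have hev : Even ((if 2 ∈ I then Function.update c i 1 2 else 0)
        + (if 5 ∈ I then Function.update c i 1 5 else 0)
        + (if 7 ∈ I then Function.update c i 1 7 else 0)) := by
      rw [Function.update_of_ne (Ne.symm n2), Function.update_of_ne (Ne.symm n5),
        Function.update_of_ne (Ne.symm n7)]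
      exact heven
    have := key _ hb hev i hi
    rw [Function.update_self] at this
    omega
  refine ⟨hone, ?_, ?_, ?_, ?_⟩
  · -- c i ≤ 2
    intro i hi
    by_contra hgt
    push_neg at hgt
    have hb : ∀ j ∈ I, 1 ≤ Function.update c i (c i - 2) j ∧
        Function.update c i (c i - 2) j ≤ c j := by
      intro j hj
      rcases eq_or_ne j i with rfl | hne
      · rw [Function.update_self]; omega
      · rw [Function.update_of_ne hne]; exact ⟨hpos j hj, le_refl _⟩
    rcases Decidable.em (i = 2) with rfl | n2
    · have hev : Even ((if 2 ∈ I then Function.update c 2 (c 2 - 2) 2 else 0)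
          + (if 5 ∈ I then Function.update c 2 (c 2 - 2) 5 else 0)
          + (if 7 ∈ I then Function.update c 2 (c 2 - 2) 7 else 0)) := by
        rw [Function.update_self, Function.update_of_ne (by norm_num),
          Function.update_of_ne (by norm_num), if_pos hi]
        rw [if_pos hi] at heven
        rw [Nat.even_iff] at heven ⊢
        omega
      have := key _ hb hev 2 hi
      rw [Function.update_self] at this
      omega
    rcases Decidable.em (i = 5) with rfl | n5
    · have hev : Even ((if 2 ∈ I then Function.update c 5 (c 5 - 2) 2 else 0)
          + (if 5 ∈ I then Function.update c 5 (c 5 - 2) 5 else 0)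
          + (if 7 ∈ I then Function.update c 5 (c 5 - 2) 7 else 0)) := by
        rw [Function.update_self, Function.update_of_ne (by norm_num),
          Function.update_of_ne (by norm_num), if_pos hi]
        rw [if_pos hi] at heven
        rw [Nat.even_iff] at heven ⊢
        omega
      have := key _ hb hev 5 hi
      rw [Function.update_self] at this
      omega
    rcases Decidable.em (i = 7) with rfl | n7
    · have hev : Even ((if 2 ∈ I then Function.update c 7 (c 7 - 2) 2 else 0)
          + (if 5 ∈ I then Function.update c 7 (c 7 - 2) 5 else 0)
          + (if 7 ∈ I then Function.update c 7 (c 7 - 2) 7 else 0)) := by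
        rw [Function.update_self, Function.update_of_ne (by norm_num),
          Function.update_of_ne (by norm_num), if_pos hi]
        rw [if_pos hi] at heven
        rw [Nat.even_iff] at heven ⊢
        omega
      have := key _ hb hev 7 hi
      rw [Function.update_self] at this
      omega
    · have := hone i hi n2 n5 n7
      omega
  · -- not both c 2, c 5 ≥ 2
    intro h2I h5I hcon
    set c' := Function.update (Function.update c 2 (c 2 - 1)) 5 (c 5 - 1) with hc'
    have e2 : c' 2 = c 2 - 1 := by
      rw [hc', Function.update_of_ne (by norm_num), Function.update_self]
    have e5 : c' 5 = c 5 - 1 := by rw [hc', Function.update_self]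
    have e7 : c' 7 = c 7 := by
      rw [hc', Function.update_of_ne (by norm_num), Function.update_of_ne (by norm_num)]
    have eo : ∀ j, j ≠ 2 → j ≠ 5 → c' j = c j := by
      intro j hj2 hj5
      rw [hc', Function.update_of_ne hj5, Function.update_of_ne hj2]
    have hb : ∀ j ∈ I, 1 ≤ c' j ∧ c' j ≤ c j := by
      intro j hj
      rcases Decidable.em (j = 2) with rfl | n2
      · rw [e2]; omega
      rcases Decidable.em (j = 5) with rfl | n5
      · rw [e5]; omega
      · rw [eo j n2 n5]; exact ⟨hpos j hj, le_refl _⟩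
    have hev : Even ((if 2 ∈ I then c' 2 else 0) + (if 5 ∈ I then c' 5 else 0)
        + (if 7 ∈ I then c' 7 else 0)) := by
      rw [e2, e5, e7, if_pos h2I, if_pos h5I]
      rw [if_pos h2I, if_pos h5I] at heven
      rw [Nat.even_iff] at heven ⊢
      omega
    have := key _ hb hev 2 h2I
    rw [e2] at this
    omega
  · -- not both c 2, c 7 ≥ 2
    intro h2I h7I hcon
    set c' := Function.update (Function.update c 2 (c 2 - 1)) 7 (c 7 - 1) with hc'
    have e2 : c' 2 = c 2 - 1 := by
      rw [hc', Function.update_of_ne (by norm_num), Function.update_self]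
    have e7 : c' 7 = c 7 - 1 := by rw [hc', Function.update_self]
    have e5 : c' 5 = c 5 := by
      rw [hc', Function.update_of_ne (by norm_num), Function.update_of_ne (by norm_num)]
    have eo : ∀ j, j ≠ 2 → j ≠ 7 → c' j = c j := by
      intro j hj2 hj7
      rw [hc', Function.update_of_ne hj7, Function.update_of_ne hj2]
    have hb : ∀ j ∈ I, 1 ≤ c' j ∧ c' j ≤ c j := by
      intro j hj
      rcases Decidable.em (j = 2) with rfl | n2
      · rw [e2]; omega
      rcases Decidable.em (j = 7) with rfl | n7
      · rw [e7]; omega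
      · rw [eo j n2 n7]; exact ⟨hpos j hj, le_refl _⟩
    have hev : Even ((if 2 ∈ I then c' 2 else 0) + (if 5 ∈ I then c' 5 else 0)
        + (if 7 ∈ I then c' 7 else 0)) := by
      rw [e2, e5, e7, if_pos h2I, if_pos h7I]
      rw [if_pos h2I, if_pos h7I] at heven
      rw [Nat.even_iff] at heven ⊢
      omega
    have := key _ hb hev 2 h2I
    rw [e2] at this
    omega
  · -- not both c 5, c 7 ≥ 2
    intro h5I h7I hcon
    set c' := Function.update (Function.update c 5 (c 5 - 1)) 7 (c 7 - 1) with hc'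
    have e5 : c' 5 = c 5 - 1 := by
      rw [hc', Function.update_of_ne (by norm_num), Function.update_self]
    have e7 : c' 7 = c 7 - 1 := by rw [hc', Function.update_self]
    have e2 : c' 2 = c 2 := by
      rw [hc', Function.update_of_ne (by norm_num), Function.update_of_ne (by norm_num)]
    have eo : ∀ j, j ≠ 5 → j ≠ 7 → c' j = c j := by
      intro j hj5 hj7
      rw [hc', Function.update_of_ne hj7, Function.update_of_ne hj5]
    have hb : ∀ j ∈ I, 1 ≤ c' j ∧ c' j ≤ c j := by
      intro j hj
      rcases Decidable.em (j = 5) with rfl | n5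
      · rw [e5]; omega
      rcases Decidable.em (j = 7) with rfl | n7
      · rw [e7]; omega
      · rw [eo j n5 n7]; exact ⟨hpos j hj, le_refl _⟩
    have hev : Even ((if 2 ∈ I then c' 2 else 0) + (if 5 ∈ I then c' 5 else 0)
        + (if 7 ∈ I then c' 7 else 0)) := by
      rw [e2, e5, e7, if_pos h5I, if_pos h7I]
      rw [if_pos h5I, if_pos h7I] at heven
      rw [Nat.even_iff] at heven ⊢
      omega
    have := key _ hb hev 5 h5I
    rw [e5] at this
    omega

lemma dfacts {I : Finset ℕ} (hI : I ⊆ Finset.Icc 1 7) {c : ℕ → ℕ}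
    (hc : ICanonCoeff I c) :
    (if 1 ∈ I then c 1 else 0) ≤ 1 ∧ (if 3 ∈ I then c 3 else 0) ≤ 1 ∧
    (if 4 ∈ I then c 4 else 0) ≤ 1 ∧ (if 6 ∈ I then c 6 else 0) ≤ 1 ∧
    (if 2 ∈ I then c 2 else 0) ≤ 2 ∧ (if 5 ∈ I then c 5 else 0) ≤ 2 ∧
    (if 7 ∈ I then c 7 else 0) ≤ 2 ∧
    ¬(2 ≤ (if 2 ∈ I then c 2 else 0) ∧ 2 ≤ (if 5 ∈ I then c 5 else 0)) ∧
    ¬(2 ≤ (if 2 ∈ I then c 2 else 0) ∧ 2 ≤ (if 7 ∈ I then c 7 else 0)) ∧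
    ¬(2 ≤ (if 5 ∈ I then c 5 else 0) ∧ 2 ≤ (if 7 ∈ I then c 7 else 0)) := by
  obtain ⟨hone, hle2, p25, p27, p57⟩ := canon_facts hI hc
  refine ⟨?_, ?_, ?_, ?_, ?_, ?_, ?_, ?_, ?_, ?_⟩
  · split
    · next h => exact (hone 1 h (by norm_num) (by norm_num) (by norm_num)).le
    · omega
  · split
    · next h => exact (hone 3 h (by norm_num) (by norm_num) (by norm_num)).le
    · omega
  · split
    · next h => exact (hone 4 h (by norm_num) (by norm_num) (by norm_num)).le
    · omega
  · split
    · next h => exact (hone 6 h (by norm_num) (by norm_num) (by norm_num)).le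
    · omega
  · split
    · next h => exact hle2 2 h
    · omega
  · split
    · next h => exact hle2 5 h
    · omega
  · split
    · next h => exact hle2 7 h
    · omega
  · rintro ⟨a, b⟩
    by_cases h2 : 2 ∈ I
    · by_cases h5 : 5 ∈ I
      · rw [if_pos h2] at a; rw [if_pos h5] at b; exact p25 h2 h5 ⟨a, b⟩
      · rw [if_neg h5] at b; omega
    · rw [if_neg h2] at a; omega
  · rintro ⟨a, b⟩
    by_cases h2 : 2 ∈ I
    · by_cases h7 : 7 ∈ I
      · rw [if_pos h2] at a; rw [if_pos h7] at b; exact p27 h2 h7 ⟨a, b⟩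
      · rw [if_neg h7] at b; omega
    · rw [if_neg h2] at a; omega
  · rintro ⟨a, b⟩
    by_cases h5 : 5 ∈ I
    · by_cases h7 : 7 ∈ I
      · rw [if_pos h5] at a; rw [if_pos h7] at b; exact p57 h5 h7 ⟨a, b⟩
      · rw [if_neg h7] at b; omega
    · rw [if_neg h5] at a; omega

lemma canon_witness : ICanonCoeff (Finset.Icc 1 7) (fun i => if i = 5 then 2 else 1) := by
  refine ⟨fun i _ => by dsimp only; split <;> omega, ?_, ?_⟩
  · apply (memJE7_iff _).mpr
    norm_num
  · intro c' hb hm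
    have hev := (memJE7_iff c').mp hm
    have h2 := hb 2 (by norm_num)
    have h5 := hb 5 (by norm_num)
    have h7 := hb 7 (by norm_num)
    norm_num at h2 h5 h7
    have hc5 : c' 5 = 2 := by
      rw [Nat.even_iff] at hev
      omega
    apply Finset.sum_congr rfl
    intro i hi
    rw [Finset.mem_Icc] at hi
    obtain ⟨hlo, hhi⟩ := hi
    have hbi := hb i (by rw [Finset.mem_Icc]; omega)
    interval_cases i
    · rw [show c' 1 = 1 by norm_num at hbi; omega]; norm_num
    · rw [show c' 2 = 1 by norm_num at hbi; omega]; norm_num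
    · rw [show c' 3 = 1 by norm_num at hbi; omega]; norm_num
    · rw [show c' 4 = 1 by norm_num at hbi; omega]; norm_num
    · rw [hc5]; norm_num
    · rw [show c' 6 = 1 by norm_num at hbi; omega]; norm_num
    · rw [show c' 7 = 1 by norm_num at hbi; omega]; norm_num

/-- The maximum of `2θ(ξ)` over all `I`-canonical elements of
`Ẽ_7` (over all nonempty `I ⊆ {1,…,7}`) is `40`, the maximum of `2ω₇(ξ)` is `32`,
and both are attained at `ξ = H₁+H₂+H₃+H₄+2H₅+H₆+H₇`. -/
theorem e7_minimal_uniton_numbers :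
    IsGreatest {r : ℚ | ∃ (I : Finset ℕ) (c : ℕ → ℕ), I ⊆ Finset.Icc 1 7 ∧
        I.Nonempty ∧ ICanonCoeff I c ∧ r = 2 * ∑ i ∈ I, thetaCoef i * c i} 40 ∧
    IsGreatest {r : ℚ | ∃ (I : Finset ℕ) (c : ℕ → ℕ), I ⊆ Finset.Icc 1 7 ∧
        I.Nonempty ∧ ICanonCoeff I c ∧ r = 2 * ∑ i ∈ I, omega7Coef i * c i} 32 ∧
    (ICanonCoeff (Finset.Icc 1 7) (fun i => if i = 5 then 2 else 1) ∧
      2 * (∑ i ∈ Finset.Icc 1 7, thetaCoef i *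
        ((if i = 5 then 2 else 1 : ℕ) : ℚ)) = 40 ∧
      2 * (∑ i ∈ Finset.Icc 1 7, omega7Coef i *
        ((if i = 5 then 2 else 1 : ℕ) : ℚ)) = 32) := by

  constructor
  · constructor
    · refine ⟨Finset.Icc 1 7, (fun i => if i = 5 then 2 else 1), le_refl _,
        ⟨1, by norm_num⟩, canon_witness, ?_⟩
      rw [show Finset.Icc 1 7 = ({1,2,3,4,5,6,7} : Finset ℕ) by rfl]
      norm_num [thetaCoef]
    · rintro r ⟨I, c, hI, -, hc, rfl⟩
      obtain ⟨b1, b3, b4, b6, b2, b5, b7, p25, p27, p57⟩ := dfacts hI hc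
      have hr : (2 : ℚ) * ∑ i ∈ I, thetaCoef i * (c i : ℚ)
          = ((2*(2*(if 1 ∈ I then c 1 else 0) + 2*(if 2 ∈ I then c 2 else 0)
            + 3*(if 3 ∈ I then c 3 else 0) + 4*(if 4 ∈ I then c 4 else 0)
            + 3*(if 5 ∈ I then c 5 else 0) + 2*(if 6 ∈ I then c 6 else 0)
            + (if 7 ∈ I then c 7 else 0)) : ℕ) : ℚ) := by
        rw [sum_restrict hI]
        rw [show Finset.Icc 1 7 = ({1,2,3,4,5,6,7} : Finset ℕ) by rfl]
        rw [Finset.sum_insert (by decide), Finset.sum_insert (by decide),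
          Finset.sum_insert (by decide), Finset.sum_insert (by decide),
          Finset.sum_insert (by decide), Finset.sum_insert (by decide),
          Finset.sum_singleton]
        simp only [show thetaCoef 1 = 2 from rfl, show thetaCoef 2 = 2 from rfl,
          show thetaCoef 3 = 3 from rfl, show thetaCoef 4 = 4 from rfl,
          show thetaCoef 5 = 3 from rfl, show thetaCoef 6 = 2 from rfl,
          show thetaCoef 7 = 1 from rfl, Nat.cast_ite, Nat.cast_zero]
        push_cast
        ring
      rw [hr]
      have : (2*(2*(if 1 ∈ I then c 1 else 0) + 2*(if 2 ∈ I then c 2 else 0)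
            + 3*(if 3 ∈ I then c 3 else 0) + 4*(if 4 ∈ I then c 4 else 0)
            + 3*(if 5 ∈ I then c 5 else 0) + 2*(if 6 ∈ I then c 6 else 0)
            + (if 7 ∈ I then c 7 else 0)) : ℕ) ≤ 40 := by omega
      calc ((2*(2*(if 1 ∈ I then c 1 else 0) + 2*(if 2 ∈ I then c 2 else 0)
            + 3*(if 3 ∈ I then c 3 else 0) + 4*(if 4 ∈ I then c 4 else 0)
            + 3*(if 5 ∈ I then c 5 else 0) + 2*(if 6 ∈ I then c 6 else 0)
            + (if 7 ∈ I then c 7 else 0)) : ℕ) : ℚ) ≤ ((40 : ℕ) : ℚ) := by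
              exact_mod_cast Nat.cast_le.mpr this
        _ = 40 := by norm_num
  constructor
  · constructor
    · refine ⟨Finset.Icc 1 7, (fun i => if i = 5 then 2 else 1), le_refl _,
        ⟨1, by norm_num⟩, canon_witness, ?_⟩
      rw [show Finset.Icc 1 7 = ({1,2,3,4,5,6,7} : Finset ℕ) by rfl]
      norm_num [omega7Coef]
    · rintro r ⟨I, c, hI, -, hc, rfl⟩
      obtain ⟨b1, b3, b4, b6, b2, b5, b7, p25, p27, p57⟩ := dfacts hI hc
      have hr : (2 : ℚ) * ∑ i ∈ I, omega7Coef i * (c i : ℚ)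
          = (((2*(if 1 ∈ I then c 1 else 0) + 3*(if 2 ∈ I then c 2 else 0)
            + 4*(if 3 ∈ I then c 3 else 0) + 6*(if 4 ∈ I then c 4 else 0)
            + 5*(if 5 ∈ I then c 5 else 0) + 4*(if 6 ∈ I then c 6 else 0)
            + 3*(if 7 ∈ I then c 7 else 0)) : ℕ) : ℚ) := by
        rw [sum_restrict hI]
        rw [show Finset.Icc 1 7 = ({1,2,3,4,5,6,7} : Finset ℕ) by rfl]
        rw [Finset.sum_insert (by decide), Finset.sum_insert (by decide),
          Finset.sum_insert (by decide), Finset.sum_insert (by decide),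
          Finset.sum_insert (by decide), Finset.sum_insert (by decide),
          Finset.sum_singleton]
        simp only [show omega7Coef 1 = 1 from rfl, show omega7Coef 2 = 3/2 from rfl,
          show omega7Coef 3 = 2 from rfl, show omega7Coef 4 = 3 from rfl,
          show omega7Coef 5 = 5/2 from rfl, show omega7Coef 6 = 2 from rfl,
          show omega7Coef 7 = 3/2 from rfl, Nat.cast_ite, Nat.cast_zero]
        push_cast
        ring
      rw [hr]
      have : ((2*(if 1 ∈ I then c 1 else 0) + 3*(if 2 ∈ I then c 2 else 0)
            + 4*(if 3 ∈ I then c 3 else 0) + 6*(if 4 ∈ I then c 4 else 0)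
            + 5*(if 5 ∈ I then c 5 else 0) + 4*(if 6 ∈ I then c 6 else 0)
            + 3*(if 7 ∈ I then c 7 else 0)) : ℕ) ≤ 32 := by omega
      calc (((2*(if 1 ∈ I then c 1 else 0) + 3*(if 2 ∈ I then c 2 else 0)
            + 4*(if 3 ∈ I then c 3 else 0) + 6*(if 4 ∈ I then c 4 else 0)
            + 5*(if 5 ∈ I then c 5 else 0) + 4*(if 6 ∈ I then c 6 else 0)
            + 3*(if 7 ∈ I then c 7 else 0)) : ℕ) : ℚ) ≤ ((32 : ℕ) : ℚ) := by
              exact_mod_cast Nat.cast_le.mpr this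
        _ = 32 := by norm_num
  · refine ⟨canon_witness, ?_, ?_⟩ <;>
      · rw [show Finset.Icc 1 7 = ({1,2,3,4,5,6,7} : Finset ℕ) by rfl]
        norm_num [thetaCoef, omega7Coef]
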